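/- Fix a real parameter a with a < 1 and a ≠ 0, and set E(n) = (1-a)^(-n/2) for real n. The function C_12 defined in the context tends, as real n tends to 2 with n ≠ 2, to the limit ((10a^2 - 38a - 3)·ln(1-a))/(6a^2) - (79a + 6)/(12a). (This is the paper's dimension n = 2 value of the coefficient C_12 in the heat invariant E_2 of the nonminimal operator on a 2-dimensional manifold with torsion.) -/

import Mathlib

/-!
The numerator `N(n)` of `C₁₂(n)` vanishes at `n = 2`, so near `n = 2`
`C₁₂(n) = (N(n) - N(2)) / (n - 2) · 1 / (3a²n(n+2))`, which tends to `N'(2) / (24a²)`.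
Since `(1-a)^(-n/2)` has derivative `-log(1-a)/2 · (1-a)^(-n/2)`, the derivative `N'(2)`
is `(40a² - 152a - 12) log(1-a) - 158a² - 12a`.
-/

open Real Filter Topology

theorem tendsto_div_sub_mul_of_hasDerivAt {f g : ℝ → ℝ} {f' c : ℝ} (hf : HasDerivAt f f' c)
    (hfc : f c = 0) (hg : ContinuousAt g c) (hgc : g c ≠ 0) :
    Tendsto (fun x => f x / ((x - c) * g x)) (𝓝[≠] c) (𝓝 (f' / g c)) := by
  refine ((hasDerivAt_iff_tendsto_slope.mp hf).div
    (hg.tendsto.mono_left nhdsWithin_le_nhds) hgc).congr fun x => ?_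
  rw [Pi.div_apply, slope_def_field, hfc, sub_zero, div_div]

theorem hasDerivAt_quadratic (p q r x : ℝ) :
    HasDerivAt (fun n : ℝ => p * n ^ 2 + q * n + r) (2 * p * x + q) x := by
  refine ((((hasDerivAt_pow 2 x).const_mul p).add ((hasDerivAt_id x).const_mul q)).add_const r)
    |>.congr_deriv ?_
  norm_num
  ring

noncomputable def c12Numerator (a n : ℝ) : ℝ :=
  2*(1-a) * (1 - a) ^ (-(n / 2)) * (-5*a^2*n^2 - 10*a^2*n + 38*a*n + 76*a + 12)
    - 31*a^2*n^2 + 26*a^2*n + 152*a^2 - 88*a*n - 128*a - 24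

section

variable {a : ℝ}

theorem c12Numerator_two (ha : a ≠ 1) : c12Numerator a 2 = 0 := by
  have hb : 1 - a ≠ 0 := sub_ne_zero.mpr ha.symm
  norm_num [c12Numerator, Real.rpow_neg_one]
  field_simp
  ring

theorem hasDerivAt_c12Numerator (ha : a < 1) :
    HasDerivAt (c12Numerator a) ((40*a^2 - 152*a - 12) * log (1 - a) - 158*a^2 - 12*a) 2 := by
  have hb : 0 < 1 - a := sub_pos.mpr ha
  have hE : HasDerivAt (fun n : ℝ => (1 - a) ^ (-(n / 2)))
      (log (1 - a) * (-(1 / 2)) * (1 - a) ^ (-((2 : ℝ) / 2))) 2 :=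
    ((hasDerivAt_id (2 : ℝ)).div_const 2).neg.const_rpow hb
  have hP := hasDerivAt_quadratic (-5*a^2) (38*a - 10*a^2) (76*a + 12) 2
  have hQ := hasDerivAt_quadratic (-31*a^2) (26*a^2 - 88*a) (152*a^2 - 128*a - 24) 2
  have hN := ((hE.mul hP).const_mul (2*(1-a))).add hQ
  have hE₂ : (1 - a) ^ (-((2 : ℝ) / 2)) = (1 - a)⁻¹ := by norm_num [Real.rpow_neg_one]
  refine (hN.congr_deriv ?_).congr_of_eventuallyEq (.of_forall fun n => ?_)
  · rw [hE₂]
    field_simp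
    ring
  · simp only [c12Numerator, Pi.add_apply, Pi.mul_apply]
    ring

end

theorem stmt_15 (a : ℝ) (ha1 : a < 1) (ha0 : a ≠ 0) :
    Filter.Tendsto
      (fun n : ℝ =>
        (2*(1-a) * (1 - a) ^ (-(n / 2)) * (-5*a^2*n^2 - 10*a^2*n + 38*a*n + 76*a + 12) - 31*a^2*n^2 + 26*a^2*n + 152*a^2 - 88*a*n - 128*a - 24) / (3*a^2*(n-2)*n*(n+2)))
      (nhdsWithin (2 : ℝ) {(2 : ℝ)}ᶜ)
      (nhds (((10*a^2 - 38*a - 3) * Real.log (1 - a)) / (6*a^2) - (79*a + 6) / (12*a))) := by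
  have h := tendsto_div_sub_mul_of_hasDerivAt (g := fun n => 3*a^2*n*(n+2))
    (hasDerivAt_c12Numerator ha1) (c12Numerator_two ha1.ne) (by fun_prop) (by positivity)
  convert h using 2 with n
  · simp only [c12Numerator]
    ring
  · field_simp
    ring
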